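/- Let (H,R,χ) be a pre-Cartier quasitriangular bialgebra and F ∈ H⊗H a Drinfel'd twist. Then (H_F, R_F, χ_F) is a pre-Cartier quasitriangular bialgebra, where H_F is H with comultiplication Δ_F = FΔ(·)F⁻¹, R_F = FᵒᵖRF⁻¹ and χ_F = FχF⁻¹. If (H,R,χ) is Cartier, so is (H_F, R_F, χ_F). -/

import Mathlib

open scoped TensorProduct

noncomputable section

variable (k H : Type*) [CommRing k] [Ring H] [Bialgebra k H]

/-- leg embedding `a ⊗ b ↦ a ⊗ b ⊗ 1` into `H ⊗ (H ⊗ H)`. -/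
def leg12 : H ⊗[k] H →ₐ[k] H ⊗[k] (H ⊗[k] H) :=
  Algebra.TensorProduct.map (AlgHom.id k H) Algebra.TensorProduct.includeLeft

/-- leg embedding `a ⊗ b ↦ 1 ⊗ a ⊗ b`. -/
def leg23 : H ⊗[k] H →ₐ[k] H ⊗[k] (H ⊗[k] H) :=
  Algebra.TensorProduct.includeRight

/-- leg embedding `a ⊗ b ↦ a ⊗ 1 ⊗ b`. -/
def leg13 : H ⊗[k] H →ₐ[k] H ⊗[k] (H ⊗[k] H) :=
  Algebra.TensorProduct.map (AlgHom.id k H) Algebra.TensorProduct.includeRight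

/-- `(Id ⊗ Δ)` as an algebra map `H ⊗ H → H ⊗ (H ⊗ H)`. -/
def idComul : H ⊗[k] H →ₐ[k] H ⊗[k] (H ⊗[k] H) :=
  Algebra.TensorProduct.map (AlgHom.id k H) (Bialgebra.comulAlgHom k H)

/-- `(Δ ⊗ Id)` as an algebra map `H ⊗ H → H ⊗ (H ⊗ H)` (after reassociation). -/
def comulId : H ⊗[k] H →ₐ[k] H ⊗[k] (H ⊗[k] H) :=
  (Algebra.TensorProduct.assoc k k k H H H).toAlgHom.comp
    (Algebra.TensorProduct.map (Bialgebra.comulAlgHom k H) (AlgHom.id k H))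

/-- the flip `a ⊗ b ↦ b ⊗ a` as an algebra map. -/
def swapT : H ⊗[k] H →ₐ[k] H ⊗[k] H := (Algebra.TensorProduct.comm k H H).toAlgHom

/-- A quasitriangular structure on the bialgebra `H`. -/
structure QT where
  R : H ⊗[k] H
  Rinv : H ⊗[k] H
  mul_inv : R * Rinv = 1
  inv_mul : Rinv * R = 1
  quasi_cocomm : ∀ h : H, swapT k H (Coalgebra.comul (R := k) h) * R = R * Coalgebra.comul (R := k) h
  hex1 : idComul k H R = leg13 k H R * leg12 k H R
  hex2 : comulId k H R = leg13 k H R * leg23 k H R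

/-- A pre-Cartier quasitriangular bialgebra structure on `H`. -/
structure PreCartier extends QT k H where
  χ : H ⊗[k] H
  chi_comm : ∀ h : H, χ * Coalgebra.comul (R := k) h = Coalgebra.comul (R := k) h * χ
  chi_hex1 : idComul k H χ = leg12 k H χ + leg12 k H Rinv * leg13 k H χ * leg12 k H R
  chi_hex2 : comulId k H χ = leg23 k H χ + leg23 k H Rinv * leg13 k H χ * leg23 k H R

/-!
Both twisted coproducts on `H ⊗ H` are conjugations, `(id ⊗ Δ_F)(X) = F₂₃ (id ⊗ Δ)(X) F₂₃⁻¹` and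
`(Δ_F ⊗ id)(X) = F₁₂ (Δ ⊗ id)(X) F₁₂⁻¹`. On `χ_F = F χ F⁻¹` both become conjugation by the common
value `Φ = F₁₂ (Δ ⊗ id)(F) = F₂₃ (id ⊗ Δ)(F)` of the cocycle identity, and on `R_F = F₂₁ R F⁻¹` the
factor `(id ⊗ Δ)(F₂₁)` is a cyclic permutation of `(Δ ⊗ id)(F)` (symmetrically for `Δ ⊗ id`).
Once the hexagon axioms of `R` and `χ` are inserted, it remains to move legs of `R` and `χ` past
these elements: conjugation by `R₁₂` flips the first two factors of `(Δ ⊗ id)(X)` (and by `R₂₃` the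
last two of `(id ⊗ Δ)(X)`), `χ₁₂` and `χ₂₃` commute with them, and the flipped images of `Φ` are
read off from the flipped cocycle identity.
-/

theorem mul_mul_eq_mul_mul {M : Type*} [Semigroup M] {a b c d : M} (h : a * b = c * d) (z : M) :
    a * (b * z) = c * (d * z) := by
  rw [← mul_assoc, h, mul_assoc]

theorem mul_mul_cancel_of_mul_eq_one {M : Type*} [Monoid M] {a b : M} (h : a * b = 1) (c : M) :
    a * (b * c) = c := by
  rw [← mul_assoc, h, one_mul]

theorem map_mul_map_mul_cancel {M N G : Type*} [Monoid M] [Monoid N] [FunLike G M N]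
    [MonoidHomClass G M N] {a b : M} (h : a * b = 1) (f : G) (c : N) : f a * (f b * c) = c :=
  mul_mul_cancel_of_mul_eq_one (map_mul_eq_one f h) c

namespace Algebra.TensorProduct

variable {R A B C : Type*} [CommSemiring R] [Semiring A] [Semiring B] [Semiring C]
  [Algebra R A] [Algebra R B] [Algebra R C]

theorem map_mul_tmul_one {φ ψ : A →ₐ[R] C} {u v : C} (h : ∀ a, φ a * u = v * ψ a)
    (X : A ⊗[R] B) :
    map φ (AlgHom.id R B) X * (u ⊗ₜ 1) = (v ⊗ₜ 1) * map ψ (AlgHom.id R B) X := by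
  induction X using TensorProduct.induction_on with
  | zero => simp
  | tmul a b => simp [h]
  | add x y hx hy => simp only [map_add, add_mul, mul_add, hx, hy]

theorem map_mul_one_tmul {φ ψ : B →ₐ[R] C} {u v : C} (h : ∀ b, φ b * u = v * ψ b)
    (X : A ⊗[R] B) :
    map (AlgHom.id R A) φ X * (1 ⊗ₜ u) = (1 ⊗ₜ v) * map (AlgHom.id R A) ψ X := by
  induction X using TensorProduct.induction_on with
  | zero => simp
  | tmul a b => simp [h]
  | add x y hx hy => simp only [map_add, add_mul, mul_add, hx, hy]

end Algebra.TensorProduct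

def swap23 : H ⊗[k] (H ⊗[k] H) →ₐ[k] H ⊗[k] (H ⊗[k] H) :=
  Algebra.TensorProduct.map (AlgHom.id k H) (swapT k H)

section Twisting

variable {k H}

local notation "τ" => swapT k H
local notation "ι₁₂" => leg12 k H
local notation "ι₁₃" => leg13 k H
local notation "ι₂₃" => leg23 k H
local notation "Δ₁" => comulId k H
local notation "Δ₂" => idComul k H
local notation "σ₁₂" => Algebra.TensorProduct.leftComm k H H H
local notation "σ₂₃" => swap23 k H
local notation "α" => Algebra.TensorProduct.assoc k k k H H H

theorem leg12_eq_assoc (X : H ⊗[k] H) : ι₁₂ X = α (X ⊗ₜ 1) :=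
  X.induction_on (by simp) (fun _ _ => rfl)
    (fun _ _ hx hy => by simp [TensorProduct.add_tmul, hx, hy])

theorem comulId_eq_assoc (X : H ⊗[k] H) :
    Δ₁ X = α (Algebra.TensorProduct.map (Bialgebra.comulAlgHom k H) (AlgHom.id k H) X) := rfl

theorem leftComm_leg12 (X : H ⊗[k] H) : σ₁₂ (ι₁₂ X) = ι₁₂ (τ X) :=
  X.induction_on (by simp) (fun _ _ => rfl) (fun _ _ hx hy => by simp [hx, hy])

theorem leftComm_leg13 (X : H ⊗[k] H) : σ₁₂ (ι₁₃ X) = ι₂₃ X :=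
  X.induction_on (by simp) (fun _ _ => rfl) (fun _ _ hx hy => by simp [hx, hy])

theorem leftComm_leg23 (X : H ⊗[k] H) : σ₁₂ (ι₂₃ X) = ι₁₃ X :=
  X.induction_on (by simp) (fun _ _ => rfl) (fun _ _ hx hy => by simp [hx, hy])

theorem swap23_leg12 (X : H ⊗[k] H) : σ₂₃ (ι₁₂ X) = ι₁₃ X :=
  X.induction_on (by simp) (fun _ _ => rfl) (fun _ _ hx hy => by simp [hx, hy])

theorem swap23_leg13 (X : H ⊗[k] H) : σ₂₃ (ι₁₃ X) = ι₁₂ X :=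
  X.induction_on (by simp) (fun _ _ => rfl) (fun _ _ hx hy => by simp [hx, hy])

theorem swap23_leg23 (X : H ⊗[k] H) : σ₂₃ (ι₂₃ X) = ι₂₃ (τ X) :=
  X.induction_on (by simp) (fun _ _ => rfl) (fun _ _ hx hy => by simp [hx, hy])

theorem leftComm_assoc_tmul (u : H ⊗[k] H) (c : H) : σ₁₂ (α (u ⊗ₜ c)) = α (τ u ⊗ₜ c) :=
  u.induction_on (by simp) (fun _ _ => rfl)
    (fun _ _ hx hy => by simp [TensorProduct.add_tmul, hx, hy])

theorem leftComm_swap23_assoc_tmul (u : H ⊗[k] H) (c : H) : σ₁₂ (σ₂₃ (α (u ⊗ₜ c))) = c ⊗ₜ u :=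
  u.induction_on (by simp) (fun _ _ => rfl)
    (fun _ _ hx hy => by simp [TensorProduct.add_tmul, TensorProduct.tmul_add, hx, hy])

theorem swap23_leftComm_tmul (a : H) (u : H ⊗[k] H) : σ₂₃ (σ₁₂ (a ⊗ₜ u)) = α (u ⊗ₜ a) :=
  u.induction_on (by simp) (fun _ _ => rfl)
    (fun _ _ hx hy => by simp [TensorProduct.add_tmul, TensorProduct.tmul_add, hx, hy])

theorem leftComm_comulId (X : H ⊗[k] H) :
    σ₁₂ (Δ₁ X) = α (Algebra.TensorProduct.map ((swapT k H).comp (Bialgebra.comulAlgHom k H))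
      (AlgHom.id k H) X) :=
  X.induction_on (by simp) (fun _ _ => leftComm_assoc_tmul _ _)
    (fun _ _ hx hy => by simp only [map_add, hx, hy])

theorem swap23_idComul (X : H ⊗[k] H) :
    σ₂₃ (Δ₂ X) = Algebra.TensorProduct.map (AlgHom.id k H)
      ((swapT k H).comp (Bialgebra.comulAlgHom k H)) X :=
  X.induction_on (by simp) (fun _ _ => rfl) (fun _ _ hx hy => by simp only [map_add, hx, hy])

theorem leftComm_swap23_comulId (X : H ⊗[k] H) : σ₁₂ (σ₂₃ (Δ₁ X)) = Δ₂ (τ X) :=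
  X.induction_on (by simp) (fun _ _ => leftComm_swap23_assoc_tmul _ _)
    (fun _ _ hx hy => by simp only [map_add, hx, hy])

theorem swap23_leftComm_idComul (X : H ⊗[k] H) : σ₂₃ (σ₁₂ (Δ₂ X)) = Δ₁ (τ X) :=
  X.induction_on (by simp) (fun _ _ => swap23_leftComm_tmul _ _)
    (fun _ _ hx hy => by simp only [map_add, hx, hy])

namespace QT

variable (Q : QT k H)

theorem comul_mul_Rinv (h : H) :
    Coalgebra.comul (R := k) h * Q.Rinv = Q.Rinv * τ (Coalgebra.comul (R := k) h) := by
  calc Coalgebra.comul (R := k) h * Q.Rinv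
      = Q.Rinv * (Q.R * Coalgebra.comul (R := k) h) * Q.Rinv := by
        rw [← mul_assoc, Q.inv_mul, one_mul]
    _ = Q.Rinv * τ (Coalgebra.comul (R := k) h) := by
        rw [← Q.quasi_cocomm, mul_assoc, mul_assoc, Q.mul_inv, mul_one]

theorem leftComm_comulId_mul_leg12_R (X : H ⊗[k] H) : σ₁₂ (Δ₁ X) * ι₁₂ Q.R = ι₁₂ Q.R * Δ₁ X := by
  rw [leftComm_comulId, comulId_eq_assoc, leg12_eq_assoc, ← map_mul, ← map_mul]
  exact congrArg α (Algebra.TensorProduct.map_mul_tmul_one Q.quasi_cocomm X)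

theorem comulId_mul_leg12_Rinv (X : H ⊗[k] H) : Δ₁ X * ι₁₂ Q.Rinv = ι₁₂ Q.Rinv * σ₁₂ (Δ₁ X) := by
  rw [leftComm_comulId, comulId_eq_assoc, leg12_eq_assoc, ← map_mul, ← map_mul]
  exact congrArg α (Algebra.TensorProduct.map_mul_tmul_one Q.comul_mul_Rinv X)

theorem swap23_idComul_mul_leg23_R (X : H ⊗[k] H) : σ₂₃ (Δ₂ X) * ι₂₃ Q.R = ι₂₃ Q.R * Δ₂ X := by
  rw [swap23_idComul]
  exact Algebra.TensorProduct.map_mul_one_tmul Q.quasi_cocomm X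

theorem idComul_mul_leg23_Rinv (X : H ⊗[k] H) : Δ₂ X * ι₂₃ Q.Rinv = ι₂₃ Q.Rinv * σ₂₃ (Δ₂ X) := by
  rw [swap23_idComul]
  exact Algebra.TensorProduct.map_mul_one_tmul Q.comul_mul_Rinv X

end QT

namespace PreCartier

variable (P : PreCartier k H)

theorem commute_leg12_chi_comulId (X : H ⊗[k] H) : Commute (ι₁₂ P.χ) (Δ₁ X) := by
  rw [Commute, SemiconjBy, comulId_eq_assoc, leg12_eq_assoc, ← map_mul, ← map_mul]
  exact (congrArg α (Algebra.TensorProduct.map_mul_tmul_one (fun h => (P.chi_comm h).symm) X)).symm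

theorem commute_leg23_chi_idComul (X : H ⊗[k] H) : Commute (ι₂₃ P.χ) (Δ₂ X) :=
  (Algebra.TensorProduct.map_mul_one_tmul (fun h => (P.chi_comm h).symm) X).symm

end PreCartier

theorem comulId_inv_mul_leg12_inv {F : (H ⊗[k] H)ˣ} (hF : ι₁₂ F * Δ₁ F = ι₂₃ F * Δ₂ F) :
    Δ₁ ↑F⁻¹ * ι₁₂ ↑F⁻¹ = Δ₂ ↑F⁻¹ * ι₂₃ ↑F⁻¹ :=
  left_inv_eq_right_inv (a := ι₁₂ F * Δ₁ F)
    (by rw [mul_assoc, map_mul_map_mul_cancel F.inv_mul, map_mul_eq_one _ F.inv_mul])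
    (by rw [hF, mul_assoc, map_mul_map_mul_cancel F.mul_inv, map_mul_eq_one _ F.mul_inv])

def twistComul (F : (H ⊗[k] H)ˣ) : H →ₗ[k] H ⊗[k] H :=
  (LinearMap.mulRight k ↑F⁻¹).comp ((LinearMap.mulLeft k ↑F).comp (Coalgebra.comul (R := k)))

def QT.twistR (Q : QT k H) (F : (H ⊗[k] H)ˣ) : H ⊗[k] H := τ F * Q.R * ↑F⁻¹

def QT.twistRinv (Q : QT k H) (F : (H ⊗[k] H)ˣ) : H ⊗[k] H := F * Q.Rinv * τ ↑F⁻¹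

def PreCartier.twistChi (P : PreCartier k H) (F : (H ⊗[k] H)ˣ) : H ⊗[k] H := F * P.χ * ↑F⁻¹

variable {F : (H ⊗[k] H)ˣ}

theorem twistComul_apply (h : H) : twistComul F h = F * Coalgebra.comul (R := k) h * ↑F⁻¹ := rfl

theorem lTensor_twistComul (X : H ⊗[k] H) :
    (twistComul F).lTensor H X = ι₂₃ F * Δ₂ X * ι₂₃ ↑F⁻¹ :=
  X.induction_on (by simp) (fun _ _ => by simp [twistComul_apply, leg23, idComul])
    (fun _ _ hx hy => by simp only [map_add, add_mul, mul_add, hx, hy])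

theorem assoc_rTensor_twistComul (X : H ⊗[k] H) :
    TensorProduct.assoc k H H H ((twistComul F).rTensor H X) = ι₁₂ F * Δ₁ X * ι₁₂ ↑F⁻¹ :=
  X.induction_on (by simp)
    (fun _ _ => by
      simp only [LinearMap.rTensor_tmul, twistComul_apply, leg12_eq_assoc, comulId_eq_assoc,
        Algebra.TensorProduct.map_tmul, Bialgebra.comulAlgHom_apply, AlgHom.coe_id, id_eq,
        ← map_mul, Algebra.TensorProduct.tmul_mul_tmul, one_mul, mul_one]
      rfl)
    (fun _ _ hx hy => by simp only [map_add, add_mul, mul_add, hx, hy])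

theorem leftComm_cocycle (hF : ι₁₂ F * Δ₁ F = ι₂₃ F * Δ₂ F) :
    ι₁₂ (τ F) * σ₁₂ (Δ₁ F) = ι₁₃ F * σ₁₂ (Δ₂ F) := by
  simpa only [map_mul, leftComm_leg12, leftComm_leg23] using congrArg σ₁₂ hF

theorem swap23_cocycle (hF : ι₁₂ F * Δ₁ F = ι₂₃ F * Δ₂ F) :
    ι₁₃ F * σ₂₃ (Δ₁ F) = ι₂₃ (τ F) * σ₂₃ (Δ₂ F) := by
  simpa only [map_mul, swap23_leg12, swap23_leg23] using congrArg σ₂₃ hF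

namespace QT

variable (Q : QT k H)

theorem twistR_mul_twistRinv : Q.twistR F * Q.twistRinv F = 1 := by
  simp only [twistR, twistRinv, mul_assoc, Units.inv_mul_cancel_left,
    mul_mul_cancel_of_mul_eq_one Q.mul_inv, map_mul_eq_one _ F.mul_inv]

theorem twistRinv_mul_twistR : Q.twistRinv F * Q.twistR F = 1 := by
  simp only [twistR, twistRinv, mul_assoc, map_mul_map_mul_cancel F.inv_mul,
    mul_mul_cancel_of_mul_eq_one Q.inv_mul, Units.mul_inv]

theorem swapT_twistComul_mul_twistR (h : H) :
    τ (twistComul F h) * Q.twistR F = Q.twistR F * twistComul F h := by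
  simp only [twistComul_apply, twistR, map_mul, mul_assoc, map_mul_map_mul_cancel F.inv_mul,
    Units.inv_mul_cancel_left, mul_mul_eq_mul_mul (Q.quasi_cocomm h)]

theorem lTensor_twistComul_twistR (hF : ι₁₂ F * Δ₁ F = ι₂₃ F * Δ₂ F) :
    (twistComul F).lTensor H (Q.twistR F) = ι₁₃ (Q.twistR F) * ι₁₂ (Q.twistR F) := by
  have hcyc : ι₂₃ F * Δ₂ (τ F) = ι₁₃ (τ F) * σ₁₂ (σ₂₃ (Δ₂ F)) := by
    simpa only [map_mul, swap23_leg12, leftComm_leg13, leftComm_swap23_comulId, swap23_leg23,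
      leftComm_leg23] using congrArg (fun x => σ₁₂ (σ₂₃ x)) hF
  have hR₁₃ : σ₁₂ (σ₂₃ (Δ₂ F)) * ι₁₃ Q.R = ι₁₃ Q.R * σ₁₂ (Δ₂ F) := by
    simpa only [map_mul, leftComm_leg23] using congrArg σ₁₂ (Q.swap23_idComul_mul_leg23_R F)
  have hflip : σ₁₂ (Δ₂ F) = ι₁₃ ↑F⁻¹ * (ι₁₂ (τ F) * σ₁₂ (Δ₁ F)) := by
    rw [leftComm_cocycle hF, map_mul_map_mul_cancel F.inv_mul]
  calc (twistComul F).lTensor H (Q.twistR F)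
      = ι₂₃ F * Δ₂ (τ F) * (ι₁₃ Q.R * ι₁₂ Q.R) * Δ₂ ↑F⁻¹ * ι₂₃ ↑F⁻¹ := by
        rw [lTensor_twistComul, twistR, map_mul, map_mul, Q.hex1]; simp only [mul_assoc]
    _ = ι₁₃ (τ F) * ι₁₃ Q.R * σ₁₂ (Δ₂ F) * ι₁₂ Q.R * Δ₂ ↑F⁻¹ * ι₂₃ ↑F⁻¹ := by
        rw [hcyc]; simp only [mul_assoc, mul_mul_eq_mul_mul hR₁₃]
    _ = ι₁₃ (τ F) * ι₁₃ Q.R * ι₁₃ ↑F⁻¹ * ι₁₂ (τ F) * ι₁₂ Q.R * Δ₁ F * Δ₂ ↑F⁻¹ * ι₂₃ ↑F⁻¹ := by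
        rw [hflip]; simp only [mul_assoc, mul_mul_eq_mul_mul (Q.leftComm_comulId_mul_leg12_R F)]
    _ = ι₁₃ (Q.twistR F) * ι₁₂ (Q.twistR F) := by
        simp only [twistR, map_mul, mul_assoc, ← comulId_inv_mul_leg12_inv hF,
          map_mul_map_mul_cancel F.mul_inv]

theorem assoc_rTensor_twistComul_twistR (hF : ι₁₂ F * Δ₁ F = ι₂₃ F * Δ₂ F) :
    TensorProduct.assoc k H H H ((twistComul F).rTensor H (Q.twistR F))
      = ι₁₃ (Q.twistR F) * ι₂₃ (Q.twistR F) := by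
  have hcyc : ι₁₂ F * Δ₁ (τ F) = ι₁₃ (τ F) * σ₂₃ (σ₁₂ (Δ₁ F)) := by
    simpa only [map_mul, leftComm_leg23, swap23_leg13, swap23_leftComm_idComul, leftComm_leg12,
      swap23_leg12] using congrArg (fun x => σ₂₃ (σ₁₂ x)) hF.symm
  have hR₁₃ : σ₂₃ (σ₁₂ (Δ₁ F)) * ι₁₃ Q.R = ι₁₃ Q.R * σ₂₃ (Δ₁ F) := by
    simpa only [map_mul, swap23_leg12] using congrArg σ₂₃ (Q.leftComm_comulId_mul_leg12_R F)
  have hflip : σ₂₃ (Δ₁ F) = ι₁₃ ↑F⁻¹ * (ι₂₃ (τ F) * σ₂₃ (Δ₂ F)) := by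
    rw [← swap23_cocycle hF, map_mul_map_mul_cancel F.inv_mul]
  calc TensorProduct.assoc k H H H ((twistComul F).rTensor H (Q.twistR F))
      = ι₁₂ F * Δ₁ (τ F) * (ι₁₃ Q.R * ι₂₃ Q.R) * Δ₁ ↑F⁻¹ * ι₁₂ ↑F⁻¹ := by
        rw [assoc_rTensor_twistComul, twistR, map_mul, map_mul, Q.hex2]; simp only [mul_assoc]
    _ = ι₁₃ (τ F) * ι₁₃ Q.R * σ₂₃ (Δ₁ F) * ι₂₃ Q.R * Δ₁ ↑F⁻¹ * ι₁₂ ↑F⁻¹ := by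
        rw [hcyc]; simp only [mul_assoc, mul_mul_eq_mul_mul hR₁₃]
    _ = ι₁₃ (τ F) * ι₁₃ Q.R * ι₁₃ ↑F⁻¹ * ι₂₃ (τ F) * ι₂₃ Q.R * Δ₂ F * Δ₁ ↑F⁻¹ * ι₁₂ ↑F⁻¹ := by
        rw [hflip]; simp only [mul_assoc, mul_mul_eq_mul_mul (Q.swap23_idComul_mul_leg23_R F)]
    _ = ι₁₃ (Q.twistR F) * ι₂₃ (Q.twistR F) := by
        simp only [twistR, map_mul, mul_assoc, comulId_inv_mul_leg12_inv hF,
          map_mul_map_mul_cancel F.mul_inv]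

end QT

namespace PreCartier

variable (P : PreCartier k H)

theorem twistChi_mul_twistComul (h : H) :
    P.twistChi F * twistComul F h = twistComul F h * P.twistChi F := by
  simp only [twistChi, twistComul_apply, mul_assoc, Units.inv_mul_cancel_left,
    mul_mul_eq_mul_mul (P.chi_comm h)]

theorem twistR_mul_twistChi (hC : P.R * P.χ = τ P.χ * P.R) :
    P.twistR F * P.twistChi F = τ (P.twistChi F) * P.twistR F := by
  simp only [QT.twistR, twistChi, map_mul, mul_assoc, Units.inv_mul_cancel_left,
    map_mul_map_mul_cancel F.inv_mul, mul_mul_eq_mul_mul hC]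

theorem lTensor_twistComul_twistChi (hF : ι₁₂ F * Δ₁ F = ι₂₃ F * Δ₂ F) :
    (twistComul F).lTensor H (P.twistChi F)
      = ι₁₂ (P.twistChi F) + ι₁₂ (P.twistRinv F) * ι₁₃ (P.twistChi F) * ι₁₂ (P.twistR F) := by
  have key : σ₁₂ (Δ₁ F) * ι₁₃ P.χ * σ₁₂ (Δ₁ ↑F⁻¹)
      = ι₁₂ (τ ↑F⁻¹) * ι₁₃ (P.twistChi F) * ι₁₂ (τ F) := by
    have hΔF : σ₁₂ (Δ₁ F) = ι₁₂ (τ ↑F⁻¹) * (ι₁₃ F * σ₁₂ (Δ₂ F)) := by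
      rw [← leftComm_cocycle hF, map_mul_map_mul_cancel (map_mul_eq_one τ F.inv_mul)]
    have hΔFinv : σ₁₂ (Δ₁ ↑F⁻¹) = σ₁₂ (Δ₂ ↑F⁻¹) * ι₁₃ ↑F⁻¹ * ι₁₂ (τ F) := by
      have := congrArg σ₁₂ (comulId_inv_mul_leg12_inv hF)
      rw [map_mul, map_mul, leftComm_leg12, leftComm_leg23] at this
      rw [← this, mul_assoc, map_mul_eq_one ι₁₂ (map_mul_eq_one τ F.inv_mul), mul_one]
    have hχ : Commute (ι₁₃ P.χ) (σ₁₂ (Δ₂ F)) := by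
      simpa only [leftComm_leg23] using (P.commute_leg23_chi_idComul F).map σ₁₂
    rw [hΔF, hΔFinv, twistChi, map_mul, map_mul]
    simp only [mul_assoc, mul_mul_eq_mul_mul hχ.eq.symm,
      map_mul_map_mul_cancel (map_mul_eq_one Δ₂ F.mul_inv)]
  calc (twistComul F).lTensor H (P.twistChi F)
      = ι₁₂ F * Δ₁ F * (ι₁₂ P.χ + ι₁₂ P.Rinv * ι₁₃ P.χ * ι₁₂ P.R) * (Δ₁ ↑F⁻¹ * ι₁₂ ↑F⁻¹) := by
        rw [lTensor_twistComul, twistChi, map_mul, map_mul, P.chi_hex1]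
        simp only [mul_assoc, ← mul_mul_eq_mul_mul hF, ← comulId_inv_mul_leg12_inv hF]
    _ = ι₁₂ F * ι₁₂ P.χ * ι₁₂ ↑F⁻¹
          + ι₁₂ F * ι₁₂ P.Rinv * (σ₁₂ (Δ₁ F) * ι₁₃ P.χ * σ₁₂ (Δ₁ ↑F⁻¹)) * ι₁₂ P.R * ι₁₂ ↑F⁻¹ := by
        simp only [mul_add, add_mul, mul_assoc, map_mul_map_mul_cancel F.mul_inv,
          mul_mul_eq_mul_mul (P.commute_leg12_chi_comulId F).eq.symm,
          mul_mul_eq_mul_mul (P.comulId_mul_leg12_Rinv F),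
          mul_mul_eq_mul_mul (P.leftComm_comulId_mul_leg12_R ↑F⁻¹).symm]
    _ = ι₁₂ (P.twistChi F) + ι₁₂ (P.twistRinv F) * ι₁₃ (P.twistChi F) * ι₁₂ (P.twistR F) := by
        rw [key]; simp only [twistChi, QT.twistRinv, QT.twistR, map_mul, mul_assoc]

theorem assoc_rTensor_twistComul_twistChi (hF : ι₁₂ F * Δ₁ F = ι₂₃ F * Δ₂ F) :
    TensorProduct.assoc k H H H ((twistComul F).rTensor H (P.twistChi F))
      = ι₂₃ (P.twistChi F) + ι₂₃ (P.twistRinv F) * ι₁₃ (P.twistChi F) * ι₂₃ (P.twistR F) := by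
  have key : σ₂₃ (Δ₂ F) * ι₁₃ P.χ * σ₂₃ (Δ₂ ↑F⁻¹)
      = ι₂₃ (τ ↑F⁻¹) * ι₁₃ (P.twistChi F) * ι₂₃ (τ F) := by
    have hΔF : σ₂₃ (Δ₂ F) = ι₂₃ (τ ↑F⁻¹) * (ι₁₃ F * σ₂₃ (Δ₁ F)) := by
      rw [swap23_cocycle hF, map_mul_map_mul_cancel (map_mul_eq_one τ F.inv_mul)]
    have hΔFinv : σ₂₃ (Δ₂ ↑F⁻¹) = σ₂₃ (Δ₁ ↑F⁻¹) * ι₁₃ ↑F⁻¹ * ι₂₃ (τ F) := by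
      have := congrArg σ₂₃ (comulId_inv_mul_leg12_inv hF)
      rw [map_mul, map_mul, swap23_leg12, swap23_leg23] at this
      rw [this, mul_assoc, map_mul_eq_one ι₂₃ (map_mul_eq_one τ F.inv_mul), mul_one]
    have hχ : Commute (ι₁₃ P.χ) (σ₂₃ (Δ₁ F)) := by
      simpa only [swap23_leg12] using (P.commute_leg12_chi_comulId F).map σ₂₃
    rw [hΔF, hΔFinv, twistChi, map_mul, map_mul]
    simp only [mul_assoc, mul_mul_eq_mul_mul hχ.eq.symm,
      map_mul_map_mul_cancel (map_mul_eq_one Δ₁ F.mul_inv)]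
  calc TensorProduct.assoc k H H H ((twistComul F).rTensor H (P.twistChi F))
      = ι₂₃ F * Δ₂ F * (ι₂₃ P.χ + ι₂₃ P.Rinv * ι₁₃ P.χ * ι₂₃ P.R) * (Δ₂ ↑F⁻¹ * ι₂₃ ↑F⁻¹) := by
        rw [assoc_rTensor_twistComul, twistChi, map_mul, map_mul, P.chi_hex2]
        simp only [mul_assoc, mul_mul_eq_mul_mul hF, comulId_inv_mul_leg12_inv hF]
    _ = ι₂₃ F * ι₂₃ P.χ * ι₂₃ ↑F⁻¹
          + ι₂₃ F * ι₂₃ P.Rinv * (σ₂₃ (Δ₂ F) * ι₁₃ P.χ * σ₂₃ (Δ₂ ↑F⁻¹)) * ι₂₃ P.R * ι₂₃ ↑F⁻¹ := by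
        simp only [mul_add, add_mul, mul_assoc, map_mul_map_mul_cancel F.mul_inv,
          mul_mul_eq_mul_mul (P.commute_leg23_chi_idComul F).eq.symm,
          mul_mul_eq_mul_mul (P.idComul_mul_leg23_Rinv F),
          mul_mul_eq_mul_mul (P.swap23_idComul_mul_leg23_R ↑F⁻¹).symm]
    _ = ι₂₃ (P.twistChi F) + ι₂₃ (P.twistRinv F) * ι₁₃ (P.twistChi F) * ι₂₃ (P.twistR F) := by
        rw [key]; simp only [twistChi, QT.twistRinv, QT.twistR, map_mul, mul_assoc]

end PreCartier

end Twisting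

theorem twist_preCartier (P : PreCartier k H) (F Finv : H ⊗[k] H)
    (hF1 : F * Finv = 1) (hF2 : Finv * F = 1)
    (hcocycle : leg12 k H F * comulId k H F = leg23 k H F * idComul k H F) :
    let ΔF : H →ₗ[k] H ⊗[k] H :=
      (LinearMap.mulRight k Finv).comp
        ((LinearMap.mulLeft k F).comp (Coalgebra.comul (R := k)))
    let idΔF : H ⊗[k] H →ₗ[k] H ⊗[k] (H ⊗[k] H) := LinearMap.lTensor H ΔF
    let ΔFid : H ⊗[k] H →ₗ[k] H ⊗[k] (H ⊗[k] H) :=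
      (TensorProduct.assoc k H H H).toLinearMap.comp (LinearMap.rTensor H ΔF)
    let RF := swapT k H F * P.R * Finv
    let RFinv := F * P.Rinv * swapT k H Finv
    let χF := F * P.χ * Finv
    (RF * RFinv = 1 ∧ RFinv * RF = 1) ∧
    (∀ h : H, swapT k H (ΔF h) * RF = RF * ΔF h) ∧
    idΔF RF = leg13 k H RF * leg12 k H RF ∧
    ΔFid RF = leg13 k H RF * leg23 k H RF ∧
    (∀ h : H, χF * ΔF h = ΔF h * χF) ∧
    idΔF χF = leg12 k H χF + leg12 k H RFinv * leg13 k H χF * leg12 k H RF ∧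
    ΔFid χF = leg23 k H χF + leg23 k H RFinv * leg13 k H χF * leg23 k H RF ∧
    (P.R * P.χ = swapT k H P.χ * P.R → RF * χF = swapT k H χF * RF) := by
  obtain ⟨F, rfl, rfl⟩ : ∃ u : (H ⊗[k] H)ˣ, ↑u = F ∧ ↑u⁻¹ = Finv :=
    ⟨⟨F, Finv, hF1, hF2⟩, rfl, rfl⟩
  exact ⟨⟨P.twistR_mul_twistRinv, P.twistRinv_mul_twistR⟩, P.swapT_twistComul_mul_twistR,
    P.lTensor_twistComul_twistR hcocycle, P.assoc_rTensor_twistComul_twistR hcocycle,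
    P.twistChi_mul_twistComul, P.lTensor_twistComul_twistChi hcocycle,
    P.assoc_rTensor_twistComul_twistChi hcocycle, P.twistR_mul_twistChi⟩

end
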